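/- arXiv:2511.20078 — 3 statements merged into one kernel-verified Lean document; each statement's English description precedes it below -/
import Mathlib

section
/- Define v(t) = (1−e^{−2at})/(2a), α(t) = 1 − (a/(a+b))·(1−e^{−2(a+b)t})/(1−e^{−2at}), β(t) = 1 − (a/(a+2b))·(1−e^{−2(a+2b)t})/(1−e^{−2at}), and c_n(t) = (1/n)(1 − (a/(a+bn/(n−1)))·(1−e^{−2t(a+bn/(n−1))})/(1−e^{−2at})). Then for n ≥ 2, a > 0, b > 0 and t > 0, one has α(t)/n ≤ c_n(t) ≤ β(t)/n. -/
open Real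

lemma ou_key (x y : ℝ) (hx : 0 < x) (hxy : x ≤ y) :
    (1 - Real.exp (-y)) / y ≤ (1 - Real.exp (-x)) / x := by
  have hy : 0 < y := lt_of_lt_of_le hx hxy
  have hconv := convexOn_exp.2 (Set.mem_univ (-y)) (Set.mem_univ (0:ℝ))
    (by positivity : (0:ℝ) ≤ x / y)
    (by rw [sub_nonneg]; exact div_le_one_of_le₀ hxy hy.le : (0:ℝ) ≤ 1 - x / y)
    (by ring)
  simp only [smul_eq_mul, mul_zero, add_zero, Real.exp_zero, mul_one] at hconv
  have hxyy : x / y * (-y) = -x := by field_simp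
  rw [hxyy] at hconv
  rw [div_le_div_iff₀ hy hx]
  have hyne : y ≠ 0 := hy.ne'
  have : Real.exp (-x) * y ≤ x * Real.exp (-y) + (y - x) := by
    have := mul_le_mul_of_nonneg_right hconv hy.le
    field_simp at this
    nlinarith [this]
  nlinarith [this]

lemma ou_step (a t r s D : ℝ) (ha : 0 < a) (ht : 0 < t) (hD : 0 < D)
    (hr : 0 < r) (hrs : r ≤ s) :
    1 - a / r * (1 - Real.exp (-(2 * r * t))) / D
      ≤ 1 - a / s * (1 - Real.exp (-(2 * s * t))) / D := by
  have hs : 0 < s := lt_of_lt_of_le hr hrs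
  have hkey := ou_key (2 * r * t) (2 * s * t) (by positivity)
    (by nlinarith)
  have h1 : a / r * (1 - Real.exp (-(2 * r * t))) / D
      = (2 * a * t / D) * ((1 - Real.exp (-(2 * r * t))) / (2 * r * t)) := by
    field_simp
  have h2 : a / s * (1 - Real.exp (-(2 * s * t))) / D
      = (2 * a * t / D) * ((1 - Real.exp (-(2 * s * t))) / (2 * s * t)) := by
    field_simp
  have := mul_le_mul_of_nonneg_left hkey (by positivity : (0:ℝ) ≤ 2 * a * t / D)
  rw [h1, h2]
  linarith

/-- Two-sided bound `α(t)/n ≤ c_n(t) ≤ β(t)/n` for the Ornstein–Uhlenbeck covariance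
coefficient `c_n(t)`. -/
theorem ou_coefficient_bounds (a b t : ℝ) (n : ℕ)
    (ha : 0 < a) (hb : 0 < b) (ht : 0 < t) (hn : 2 ≤ n) :
    (1 - a / (a + b) * (1 - Real.exp (-2 * (a + b) * t)) / (1 - Real.exp (-2 * a * t))) / n
      ≤ (1 / n) * (1 - a / (a + b * n / (n - 1))
          * (1 - Real.exp (-2 * t * (a + b * n / (n - 1)))) / (1 - Real.exp (-2 * a * t)))
    ∧ (1 / n) * (1 - a / (a + b * n / (n - 1))
          * (1 - Real.exp (-2 * t * (a + b * n / (n - 1)))) / (1 - Real.exp (-2 * a * t)))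
      ≤ (1 - a / (a + 2 * b) * (1 - Real.exp (-2 * (a + 2 * b) * t))
          / (1 - Real.exp (-2 * a * t))) / n := by
  have hn2 : (2:ℝ) ≤ (n:ℝ) := by exact_mod_cast hn
  have hn1 : (0:ℝ) < (n:ℝ) - 1 := by linarith
  have hnpos : (0:ℝ) < (n:ℝ) := by linarith
  set m : ℝ := b * n / (n - 1) with hm
  have hbm : b ≤ m := by
    rw [hm, le_div_iff₀ hn1]; nlinarith
  have hm2b : m ≤ 2 * b := by
    rw [hm, div_le_iff₀ hn1]; nlinarith
  have hD : 0 < 1 - Real.exp (-2 * a * t) := by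
    have : Real.exp (-2 * a * t) < 1 := by
      rw [Real.exp_lt_one_iff]; nlinarith
    linarith
  have e1 : -2 * (a + b) * t = -(2 * (a + b) * t) := by ring
  have e2 : -2 * t * (a + m) = -(2 * (a + m) * t) := by ring
  have e3 : -2 * (a + 2 * b) * t = -(2 * (a + 2 * b) * t) := by ring
  rw [e1, e2, e3]
  have hL := ou_step a t (a + b) (a + m) _ ha ht hD (by linarith) (by linarith)
  have hR := ou_step a t (a + m) (a + 2 * b) _ ha ht hD (by linarith) (by linarith)
  constructor
  · calc (1 - a / (a + b) * (1 - Real.exp (-(2 * (a + b) * t)))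
          / (1 - Real.exp (-2 * a * t))) / n
        = (1 / n) * (1 - a / (a + b) * (1 - Real.exp (-(2 * (a + b) * t)))
          / (1 - Real.exp (-2 * a * t))) := by ring
    _ ≤ _ := by
        apply mul_le_mul_of_nonneg_left hL (by positivity)
  · calc (1 / n) * (1 - a / (a + m) * (1 - Real.exp (-(2 * (a + m) * t)))
          / (1 - Real.exp (-2 * a * t)))
        ≤ (1 / n) * (1 - a / (a + 2 * b) * (1 - Real.exp (-(2 * (a + 2 * b) * t)))
          / (1 - Real.exp (-2 * a * t))) := by
          apply mul_le_mul_of_nonneg_left hR (by positivity)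
    _ = _ := by ring
end

section
/- Let m₂ be a smooth positive probability density on R^n and f a smooth positive function with ∫ m₂ f = 1. Set J = ∫ m₂ ‖∇²f‖²/f, L = ∫ m₂ ‖∇f‖⁴/f³, N = ∫ m₂ f ‖∇ log m₂‖⁴. Then there exists a universal constant C (depending only on dimension) such that L ≤ C(J + N). -/
set_option maxHeartbeats 2000000

open Real MeasureTheory

/-- Partial derivative in direction `i`. -/
noncomputable def pd {n : ℕ} (i : Fin n) (g : (Fin n → ℝ) → ℝ) (x : Fin n → ℝ) : ℝ :=
  fderiv ℝ g x (Pi.single i 1)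

section PDCalculus

variable {n : ℕ} {i : Fin n} {g h : (Fin n → ℝ) → ℝ} {x : Fin n → ℝ}

lemma pd_mul (hg : DifferentiableAt ℝ g x) (hh : DifferentiableAt ℝ h x) :
    pd i (fun y => g y * h y) x = pd i g x * h x + g x * pd i h x := by
  unfold pd
  rw [fderiv_fun_mul hg hh]
  simp [ContinuousLinearMap.add_apply, ContinuousLinearMap.smul_apply]
  ring

lemma pd_comp {c : ℝ → ℝ} (hc : DifferentiableAt ℝ c (h x)) (hh : DifferentiableAt ℝ h x) :
    pd i (fun y => c (h y)) x = deriv c (h x) * pd i h x := by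
  unfold pd
  have hcomp : (fun y => c (h y)) = c ∘ h := rfl
  rw [hcomp, fderiv_comp x hc hh]
  simp only [ContinuousLinearMap.coe_comp', Function.comp_apply]
  have hs : (fderiv ℝ h x) (Pi.single i 1) = (fderiv ℝ h x) (Pi.single i 1) • (1:ℝ) := by simp
  rw [hs, (fderiv ℝ c (h x)).map_smul, smul_eq_mul, fderiv_apply_one_eq_deriv]
  simp only [smul_eq_mul, mul_one]
  ring

lemma pd_sum {m : ℕ} {F : Fin m → (Fin n → ℝ) → ℝ}
    (hF : ∀ j, DifferentiableAt ℝ (F j) x) :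
    pd i (fun y => ∑ j, F j y) x = ∑ j, pd i (F j) x := by
  unfold pd
  rw [fderiv_fun_sum (fun j _ => hF j)]
  simp

lemma pd_inv (hh : DifferentiableAt ℝ h x) (hx : h x ≠ 0) :
    pd i (fun y => (h y)⁻¹) x = -pd i h x / (h x) ^ 2 := by
  rw [pd_comp (differentiableAt_inv hx) hh, deriv_inv]
  field_simp

lemma pd_log (hh : DifferentiableAt ℝ h x) (hx : h x ≠ 0) :
    pd i (fun y => Real.log (h y)) x = pd i h x / h x := by
  rw [pd_comp (Real.differentiableAt_log hx) hh, Real.deriv_log]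
  ring

lemma pd_sq (hh : DifferentiableAt ℝ h x) :
    pd i (fun y => (h y) ^ 2) x = 2 * h x * pd i h x := by
  have e : (fun y => (h y) ^ 2) = fun y => h y * h y := by funext y; ring
  rw [e, pd_mul hh hh]; ring

lemma pd_contDiff (hg : ContDiff ℝ (⊤ : ℕ∞) g) (i : Fin n) : ContDiff ℝ (⊤ : ℕ∞) (pd i g) := by
  have h1 : ContDiff ℝ (⊤ : ℕ∞) (fderiv ℝ g) := hg.fderiv_right (m := (⊤ : ℕ∞)) (by simp)
  exact h1.clm_apply (contDiff_const (c := Pi.single i 1))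

lemma pd_continuous (hg : ContDiff ℝ (⊤ : ℕ∞) g) (i : Fin n) : Continuous (pd i g) :=
  (pd_contDiff hg i).continuous

lemma pd_W_formula {m₂ f : (Fin n → ℝ) → ℝ} (hm : ContDiff ℝ (⊤ : ℕ∞) m₂) (hf : ContDiff ℝ (⊤ : ℕ∞) f)
    (hfpos : ∀ x, 0 < f x) (i : Fin n) (x : Fin n → ℝ) :
    pd i (fun y => m₂ y * ((∑ j, (pd j f y) ^ 2) * pd i f y * ((f y) ^ 2)⁻¹)) x
      = pd i m₂ x * ((∑ j, (pd j f x) ^ 2) * pd i f x) / (f x) ^ 2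
        + m₂ x * ((2 * ∑ j, pd j f x * pd i (pd j f) x) * pd i f x
            + (∑ j, (pd j f x) ^ 2) * pd i (pd i f) x) / (f x) ^ 2
        - 2 * m₂ x * ((∑ j, (pd j f x) ^ 2) * (pd i f x) ^ 2) / (f x) ^ 3 := by
  have hfx : f x ≠ 0 := (hfpos x).ne'
  have hdf : DifferentiableAt ℝ f x := hf.differentiable (by simp) x
  have hdm : DifferentiableAt ℝ m₂ x := hm.differentiable (by simp) x
  have hdp : ∀ j : Fin n, DifferentiableAt ℝ (pd j f) x := fun j =>
    (pd_contDiff hf j).differentiable (by simp) x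
  have hdS : DifferentiableAt ℝ (fun y => ∑ j, (pd j f y) ^ 2) x :=
    DifferentiableAt.fun_sum (fun j _ => (hdp j).pow 2)
  have hdfsq : DifferentiableAt ℝ (fun y => (f y) ^ 2) x := hdf.pow 2
  have hdB : DifferentiableAt ℝ (fun y => ((f y) ^ 2)⁻¹) x :=
    hdfsq.inv (pow_ne_zero 2 hfx)
  have hdSp : DifferentiableAt ℝ (fun y => (∑ j, (pd j f y) ^ 2) * pd i f y) x :=
    hdS.mul (hdp i)
  have hdSpB : DifferentiableAt ℝ
      (fun y => (∑ j, (pd j f y) ^ 2) * pd i f y * ((f y) ^ 2)⁻¹) x := hdSp.mul hdB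
  rw [pd_mul hdm hdSpB, pd_mul hdSp hdB, pd_mul hdS (hdp i), pd_inv hdfsq (pow_ne_zero 2 hfx),
    pd_sq hdf, pd_sum (F := fun j y => (pd j f y) ^ 2) (fun j => (hdp j).pow 2)]
  rw [Finset.sum_congr rfl (fun j _ => pd_sq (hdp j))]
  have e2 : ∑ j, 2 * pd j f x * pd i (pd j f) x = 2 * ∑ j, pd j f x * pd i (pd j f) x := by
    rw [Finset.mul_sum]; exact Finset.sum_congr rfl fun j _ => by ring
  rw [e2]
  field_simp
  ring

end PDCalculus

lemma integral_pd_eq_zero {n : ℕ} {g : (Fin n → ℝ) → ℝ} (hg : ContDiff ℝ (⊤ : ℕ∞) g) (i : Fin n)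
    (h1 : Integrable g) (h2 : Integrable (pd i g)) : ∫ x, pd i g x = 0 := by
  set v : Fin n → ℝ := Pi.single i 1 with hv
  have hcont : Continuous (pd i g) := pd_continuous hg i
  have stepA : ∀ x : Fin n → ℝ, g (x + v) - g x = ∫ s in (0:ℝ)..1, pd i g (x + s • v) := by
    intro x
    have key : ∀ s : ℝ, HasDerivAt (fun t : ℝ => g (x + t • v)) (pd i g (x + s • v)) s := by
      intro s
      have line : HasDerivAt (fun t : ℝ => x + t • v) v s := by
        simpa using ((hasDerivAt_id s).smul_const v).const_add x
      exact ((hg.differentiable (by simp) (x + s • v)).hasFDerivAt).comp_hasDerivAt s line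
    have := intervalIntegral.integral_eq_sub_of_hasDerivAt
      (f := fun t : ℝ => g (x + t • v)) (f' := fun s => pd i g (x + s • v))
      (fun s _ => key s)
      ((hcont.comp (continuous_const.add (continuous_id.smul continuous_const))).intervalIntegrable 0 1)
    rw [this]
    simp
  set ν : Measure ℝ := volume.restrict (Set.Ioc (0:ℝ) 1) with hν
  have contF : Continuous (fun p : (Fin n → ℝ) × ℝ => pd i g (p.1 + p.2 • v)) :=
    hcont.comp (continuous_fst.add (continuous_snd.smul continuous_const))
  have intF : Integrable (fun p : (Fin n → ℝ) × ℝ => pd i g (p.1 + p.2 • v))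
      (volume.prod ν) := by
    refine ⟨contF.aestronglyMeasurable, ?_⟩
    show (∫⁻ p, (‖pd i g (p.1 + p.2 • v)‖₊ : ENNReal) ∂(volume.prod ν)) < ⊤
    rw [MeasureTheory.lintegral_prod_symm _
      (contF.measurable.nnnorm.coe_nnreal_ennreal.aemeasurable)]
    have inner : ∀ s : ℝ, ∫⁻ x, (‖pd i g (x + s • v)‖₊ : ENNReal) = ∫⁻ x, ‖pd i g x‖₊ := by
      intro s
      exact lintegral_add_right_eq_self (fun x => (‖pd i g x‖₊ : ENNReal)) (s • v)
    calc ∫⁻ s, ∫⁻ x, (‖pd i g (x + s • v)‖₊ : ENNReal) ∂volume ∂ν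
        = ∫⁻ _, ∫⁻ x, (‖pd i g x‖₊ : ENNReal) ∂volume ∂ν := lintegral_congr fun s => inner s
      _ = ν Set.univ * ∫⁻ x, (‖pd i g x‖₊ : ENNReal) := by rw [lintegral_const, mul_comm]
      _ < ⊤ := by
          apply ENNReal.mul_lt_top
          · simp [hν]
          · exact h2.hasFiniteIntegral.lt_top
  have lhs0 : ∫ x : Fin n → ℝ, (g (x + v) - g x) = 0 := by
    rw [integral_sub (h1.comp_add_right v) h1, integral_add_right_eq_self g v, sub_self]
  have swap : ∫ x : Fin n → ℝ, ∫ s in Set.Ioc (0:ℝ) 1, pd i g (x + s • v)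
      = ∫ s in Set.Ioc (0:ℝ) 1, ∫ x : Fin n → ℝ, pd i g (x + s • v) :=
    MeasureTheory.integral_integral_swap intF
  have inner2 : ∀ s : ℝ, ∫ x : Fin n → ℝ, pd i g (x + s • v) = ∫ x, pd i g x := fun s =>
    integral_add_right_eq_self (pd i g) (s • v)
  have main : ∫ x : Fin n → ℝ, (g (x + v) - g x) = ∫ s in Set.Ioc (0:ℝ) 1, ∫ x, pd i g x := by
    calc ∫ x : Fin n → ℝ, (g (x + v) - g x)
        = ∫ x : Fin n → ℝ, ∫ s in Set.Ioc (0:ℝ) 1, pd i g (x + s • v) := by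
          refine integral_congr_ae (Filter.Eventually.of_forall fun x => ?_)
          exact (stepA x).trans (intervalIntegral.integral_of_le zero_le_one)
      _ = ∫ s in Set.Ioc (0:ℝ) 1, ∫ x, pd i g (x + s • v) := swap
      _ = ∫ s in Set.Ioc (0:ℝ) 1, ∫ x, pd i g x :=
          integral_congr_ae (Filter.Eventually.of_forall fun s => inner2 s)
  rw [lhs0, MeasureTheory.setIntegral_const] at main
  simpa using main.symm
open Real MeasureTheory

lemma young4 {A B T : ℝ} (hA : 0 ≤ A) (hB : 0 ≤ B) (hT : 0 ≤ T)
    (h : T ^ 4 ≤ A ^ 3 * B) : T ≤ (1/4) * A + 16 * B := by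
  by_contra hc
  push_neg at hc
  have hS : 0 ≤ (1/4) * A + 16 * B := by positivity
  have h4 : ((1/4) * A + 16 * B) ^ 4 < T ^ 4 := pow_lt_pow_left₀ hc hS (by norm_num)
  nlinarith [mul_nonneg (mul_nonneg hA hA) (mul_nonneg hA hB),
    mul_nonneg (mul_nonneg hA hA) (mul_nonneg hB hB),
    mul_nonneg (mul_nonneg hA hB) (mul_nonneg hB hB),
    mul_nonneg (mul_nonneg hB hB) (mul_nonneg hB hB),
    mul_nonneg (mul_nonneg hA hA) (mul_nonneg hA hA)]

lemma young2 {A B T : ℝ} (hA : 0 ≤ A) (hB : 0 ≤ B) (hT : 0 ≤ T)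
    (h : T ^ 2 ≤ A * B) : T ≤ (1/4) * A + B := by
  nlinarith [sq_nonneg (A/4 - B), sq_nonneg (T - (1/4)*A - B), sq_nonneg (T + (1/4)*A + B)]

-- term of the form s * t / φ², with t² ≤ l * s²... here : t² ≤ l * s, result with l² φ
lemma term_bound1 {s t l φ : ℝ} (hφ : 0 < φ) (hs : 0 ≤ s) (hl : 0 ≤ l)
    (ht : t ^ 2 ≤ l * s) :
    s * |t| / φ ^ 2 ≤ (1/4) * (s ^ 2 / φ ^ 3) + 16 * (l ^ 2 * φ) := by
  apply young4 (by positivity) (by positivity) (by positivity)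
  have e : (s * |t| / φ ^ 2) ^ 4 = s ^ 4 * (t ^ 2) ^ 2 / φ ^ 8 := by
    rw [div_pow, mul_pow]
    rw [show |t| ^ 4 = (t ^ 2) ^ 2 by rw [← sq_abs t]; ring]
    ring
  have e2 : (s ^ 2 / φ ^ 3) ^ 3 * (l ^ 2 * φ) = s ^ 6 * l ^ 2 / φ ^ 8 := by
    field_simp
  rw [e, e2]
  refine (div_le_div_iff_of_pos_right (by positivity)).mpr ?_
  nlinarith [pow_le_pow_left₀ (sq_nonneg t) ht 2, pow_nonneg hs 4,
    mul_nonneg (mul_nonneg hl hl) (mul_nonneg hs hs)]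

lemma term_bound2 {s b φ u : ℝ} (hφ : 0 < φ) (hs : 0 ≤ s) (hb : 0 ≤ b)
    (hu : u ^ 2 ≤ s ^ 2 * b) :
    |u| / φ ^ 2 ≤ (1/4) * (s ^ 2 / φ ^ 3) + b / φ := by
  apply young2 (by positivity) (by positivity) (by positivity)
  have e : (|u| / φ ^ 2) ^ 2 = u ^ 2 / φ ^ 4 := by rw [div_pow, sq_abs]; ring_nf
  have e2 : (s ^ 2 / φ ^ 3) * (b / φ) = s ^ 2 * b / φ ^ 4 := by rw [div_mul_div_comm]; ring_nf
  rw [e, e2]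
  exact (div_le_div_iff_of_pos_right (by positivity)).mpr hu

lemma sum_identity {n : ℕ} (P L : Fin n → ℝ) (Hm : Fin n → Fin n → ℝ) (m φ : ℝ) :
    ∑ i, (m * ((∑ j, P j ^ 2) * (L i * P i)
        + ((2 * ∑ j, P j * Hm i j) * P i + (∑ j, P j ^ 2) * Hm i i)) / φ ^ 2
      - 2 * m * ((∑ j, P j ^ 2) * P i ^ 2) / φ ^ 3)
    = m * ((∑ j, P j ^ 2) * (∑ j, L j * P j)
        + (2 * (∑ i, ∑ j, P i * P j * Hm i j) + (∑ j, P j ^ 2) * (∑ i, Hm i i))) / φ ^ 2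
      - 2 * m * ((∑ j, P j ^ 2) ^ 2) / φ ^ 3 := by
  rw [Finset.sum_sub_distrib]
  congr 1
  · rw [← Finset.sum_div]
    congr 1
    rw [← Finset.mul_sum]
    congr 1
    rw [Finset.sum_add_distrib, Finset.sum_add_distrib]
    congr 1
    · rw [← Finset.mul_sum]
    · congr 1
      · rw [Finset.mul_sum]
        refine Finset.sum_congr rfl fun i _ => ?_
        rw [mul_assoc, Finset.sum_mul, Finset.mul_sum, ← Finset.mul_sum]
        exact congrArg _ (Finset.sum_congr rfl fun j _ => by ring)
      · rw [← Finset.mul_sum]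
  · rw [← Finset.sum_div]
    congr 1
    rw [← Finset.mul_sum, ← Finset.mul_sum]
    congr 1
    rw [sq]
section PointwiseBounds
variable {n : ℕ} (P L : Fin n → ℝ) (Hm : Fin n → Fin n → ℝ) {m φ : ℝ}

lemma sq_le_sumsq (i : Fin n) : P i ^ 2 ≤ ∑ j, P j ^ 2 :=
  Finset.single_le_sum (f := fun j => P j ^ 2) (fun j _ => sq_nonneg _) (Finset.mem_univ i)

lemma row_le_total (i : Fin n) : ∑ j, Hm i j ^ 2 ≤ ∑ i, ∑ j, Hm i j ^ 2 :=
  Finset.single_le_sum (f := fun i => ∑ j, Hm i j ^ 2)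
    (fun i _ => Finset.sum_nonneg fun j _ => sq_nonneg _) (Finset.mem_univ i)

lemma sumsq_nonneg : 0 ≤ ∑ j, P j ^ 2 := Finset.sum_nonneg fun j _ => sq_nonneg _

lemma total_nonneg : 0 ≤ ∑ i, ∑ j, Hm i j ^ 2 :=
  Finset.sum_nonneg fun i _ => Finset.sum_nonneg fun j _ => sq_nonneg _

-- bound for the W function itself
lemma bound_W (i : Fin n) (hm : 0 ≤ m) (hφ : 0 < φ) :
    |m * ((∑ j, P j ^ 2) * P i * ((φ ^ 2)⁻¹))|
      ≤ (1/4) * (m * (∑ j, P j ^ 2) ^ 2 / φ ^ 3) + 16 * (m * φ) := by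
  have hs := sumsq_nonneg P
  have habs : |m * ((∑ j, P j ^ 2) * P i * ((φ ^ 2)⁻¹))|
      = m * ((∑ j, P j ^ 2) * |P i| / φ ^ 2) := by
    rw [abs_mul, abs_mul, abs_mul, abs_of_nonneg hm, abs_of_nonneg hs,
      abs_of_nonneg (inv_nonneg.2 (by positivity : (0:ℝ) ≤ φ ^ 2))]
    ring
  rw [habs]
  have key : (∑ j, P j ^ 2) * |P i| / φ ^ 2
      ≤ (1/4) * ((∑ j, P j ^ 2) ^ 2 / φ ^ 3) + 16 * (1 * φ) := by
    have := term_bound1 (t := P i) (l := 1) hφ hs zero_le_one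
      (by simpa using sq_le_sumsq P i)
    simpa using this
  calc m * ((∑ j, P j ^ 2) * |P i| / φ ^ 2)
      ≤ m * ((1/4) * ((∑ j, P j ^ 2) ^ 2 / φ ^ 3) + 16 * (1 * φ)) :=
        mul_le_mul_of_nonneg_left key hm
    _ = (1/4) * (m * (∑ j, P j ^ 2) ^ 2 / φ ^ 3) + 16 * (m * φ) := by ring

-- bound for pd i (W i)
lemma bound_pdW (i : Fin n) (hm : 0 ≤ m) (hφ : 0 < φ) :
    |m * ((∑ j, P j ^ 2) * (L i * P i)
        + ((2 * ∑ j, P j * Hm i j) * P i + (∑ j, P j ^ 2) * Hm i i)) / φ ^ 2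
      - 2 * m * ((∑ j, P j ^ 2) * P i ^ 2) / φ ^ 3|
    ≤ (5/2) * (m * (∑ j, P j ^ 2) ^ 2 / φ ^ 3)
      + 10 * (m * (∑ i, ∑ j, Hm i j ^ 2) / φ)
      + 16 * (m * φ * (∑ j, L j ^ 2) ^ 2) := by
  have hs := sumsq_nonneg P
  have hl := sumsq_nonneg L
  have hsh := total_nonneg Hm
  set s := ∑ j, P j ^ 2 with hsdef
  set l := ∑ j, L j ^ 2 with hldef
  set sh := ∑ i, ∑ j, Hm i j ^ 2 with hshdef
  have hP2 : P i ^ 2 ≤ s := sq_le_sumsq P i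
  have hL2 : L i ^ 2 ≤ l := sq_le_sumsq L i
  have hrow : ∑ j, Hm i j ^ 2 ≤ sh := row_le_total Hm i
  have hR : (∑ j, P j * Hm i j) ^ 2 ≤ s * sh :=
    le_trans (Finset.sum_mul_sq_le_sq_mul_sq Finset.univ P (Hm i))
      (mul_le_mul_of_nonneg_left hrow hs)
  have hHii : Hm i i ^ 2 ≤ sh :=
    le_trans (Finset.single_le_sum (f := fun j => Hm i j ^ 2)
      (fun j _ => sq_nonneg _) (Finset.mem_univ i)) hrow
  -- triangle inequality split
  have tri : |m * (s * (L i * P i) + ((2 * ∑ j, P j * Hm i j) * P i + s * Hm i i)) / φ ^ 2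
      - 2 * m * (s * P i ^ 2) / φ ^ 3|
      ≤ m * (s * |L i * P i| / φ ^ 2)
        + m * (|(2 * ∑ j, P j * Hm i j) * P i + s * Hm i i| / φ ^ 2)
        + 2 * m * (s * P i ^ 2) / φ ^ 3 := by
    have h1 : |m * (s * (L i * P i) + ((2 * ∑ j, P j * Hm i j) * P i + s * Hm i i)) / φ ^ 2|
        ≤ m * (s * |L i * P i| / φ ^ 2)
          + m * (|(2 * ∑ j, P j * Hm i j) * P i + s * Hm i i| / φ ^ 2) := by
      rw [abs_div, abs_mul, abs_of_nonneg hm, abs_of_nonneg (by positivity : (0:ℝ) ≤ φ ^ 2)]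
      have : |s * (L i * P i) + ((2 * ∑ j, P j * Hm i j) * P i + s * Hm i i)|
          ≤ s * |L i * P i| + |(2 * ∑ j, P j * Hm i j) * P i + s * Hm i i| := by
        refine (abs_add_le _ _).trans ?_
        gcongr
        rw [abs_mul, abs_of_nonneg hs]
      calc m * |s * (L i * P i) + ((2 * ∑ j, P j * Hm i j) * P i + s * Hm i i)| / φ ^ 2
          ≤ m * (s * |L i * P i| + |(2 * ∑ j, P j * Hm i j) * P i + s * Hm i i|) / φ ^ 2 := by
            gcongr
        _ = m * (s * |L i * P i| / φ ^ 2)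
          + m * (|(2 * ∑ j, P j * Hm i j) * P i + s * Hm i i| / φ ^ 2) := by ring
    have h2 : |2 * m * (s * P i ^ 2) / φ ^ 3| = 2 * m * (s * P i ^ 2) / φ ^ 3 := by
      rw [abs_of_nonneg (by positivity)]
    calc |m * (s * (L i * P i) + ((2 * ∑ j, P j * Hm i j) * P i + s * Hm i i)) / φ ^ 2
        - 2 * m * (s * P i ^ 2) / φ ^ 3|
        ≤ |m * (s * (L i * P i) + ((2 * ∑ j, P j * Hm i j) * P i + s * Hm i i)) / φ ^ 2|
          + |2 * m * (s * P i ^ 2) / φ ^ 3| := abs_sub _ _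
      _ ≤ _ := by rw [h2]; linarith
  refine tri.trans ?_
  -- term 1
  have t1 : s * |L i * P i| / φ ^ 2 ≤ (1/4) * (s ^ 2 / φ ^ 3) + 16 * (l ^ 2 * φ) := by
    refine term_bound1 hφ hs hl ?_
    have : (L i * P i) ^ 2 = L i ^ 2 * P i ^ 2 := by ring
    rw [this]
    exact mul_le_mul hL2 hP2 (sq_nonneg _) hl
  -- term 2
  have t2 : |(2 * ∑ j, P j * Hm i j) * P i + s * Hm i i| / φ ^ 2
      ≤ (1/4) * (s ^ 2 / φ ^ 3) + (10 * sh) / φ := by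
    refine term_bound2 hφ hs (by positivity) ?_
    nlinarith [hR, hHii, hP2, sq_nonneg ((2 * ∑ j, P j * Hm i j) * P i - s * Hm i i),
      mul_nonneg hs hsh, sq_nonneg (∑ j, P j * Hm i j), sq_nonneg (P i), sq_nonneg (Hm i i),
      mul_le_mul hR hP2 (sq_nonneg _) (mul_nonneg hs hsh),
      mul_le_mul_of_nonneg_left hHii (mul_nonneg hs hs)]
  -- term 3
  have t3 : s * P i ^ 2 ≤ s ^ 2 := by nlinarith [hP2, hs]
  have goal2 : m * (s * |L i * P i| / φ ^ 2)
        + m * (|(2 * ∑ j, P j * Hm i j) * P i + s * Hm i i| / φ ^ 2)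
        + 2 * m * (s * P i ^ 2) / φ ^ 3
      ≤ m * ((1/4) * (s ^ 2 / φ ^ 3) + 16 * (l ^ 2 * φ))
        + m * ((1/4) * (s ^ 2 / φ ^ 3) + (10 * sh) / φ)
        + 2 * m * s ^ 2 / φ ^ 3 := by
    gcongr
  refine goal2.trans ?_
  have e : m * ((1/4) * (s ^ 2 / φ ^ 3) + 16 * (l ^ 2 * φ))
        + m * ((1/4) * (s ^ 2 / φ ^ 3) + (10 * sh) / φ)
        + 2 * m * s ^ 2 / φ ^ 3
      = (5/2) * (m * s ^ 2 / φ ^ 3) + 10 * (m * sh / φ) + 16 * (m * φ * l ^ 2) := by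
    ring
  rw [e]

-- bound for the summed identity (the G function)
lemma bound_G (hm : 0 ≤ m) (hφ : 0 < φ) :
    m * ((∑ j, P j ^ 2) * (∑ j, L j * P j)
        + (2 * (∑ i, ∑ j, P i * P j * Hm i j) + (∑ j, P j ^ 2) * (∑ i, Hm i i))) / φ ^ 2
    ≤ (3/4) * (m * (∑ j, P j ^ 2) ^ 2 / φ ^ 3)
      + 4 * (m * (∑ i, ∑ j, Hm i j ^ 2) / φ)
      + (n : ℝ) * (m * (∑ i, ∑ j, Hm i j ^ 2) / φ)
      + 16 * (m * φ * (∑ j, L j ^ 2) ^ 2) := by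
  have hs := sumsq_nonneg P
  have hl := sumsq_nonneg L
  have hsh := total_nonneg Hm
  set s := ∑ j, P j ^ 2 with hsdef
  set l := ∑ j, L j ^ 2 with hldef
  set sh := ∑ i, ∑ j, Hm i j ^ 2 with hshdef
  set t1 := ∑ j, L j * P j with ht1def
  set t2 := ∑ i, ∑ j, P i * P j * Hm i j with ht2def
  set t3 := ∑ i, Hm i i with ht3def
  -- Cauchy-Schwarz facts
  have cs1 : t1 ^ 2 ≤ l * s := Finset.sum_mul_sq_le_sq_mul_sq Finset.univ L P
  have cs2 : t2 ^ 2 ≤ s ^ 2 * sh := by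
    have inner : ∀ i, (∑ j, P j * Hm i j) ^ 2 ≤ s * (∑ j, Hm i j ^ 2) := fun i =>
      Finset.sum_mul_sq_le_sq_mul_sq Finset.univ P (Hm i)
    have rearr : t2 = ∑ i, P i * (∑ j, P j * Hm i j) := by
      rw [ht2def]
      refine Finset.sum_congr rfl fun i _ => ?_
      rw [Finset.mul_sum]
      exact Finset.sum_congr rfl fun j _ => by ring
    have cs : t2 ^ 2 ≤ (∑ i, P i ^ 2) * (∑ i, (∑ j, P j * Hm i j) ^ 2) := by
      rw [rearr]; exact Finset.sum_mul_sq_le_sq_mul_sq Finset.univ P _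
    have sums : (∑ i, (∑ j, P j * Hm i j) ^ 2) ≤ s * sh := by
      calc (∑ i, (∑ j, P j * Hm i j) ^ 2) ≤ ∑ i, s * (∑ j, Hm i j ^ 2) :=
            Finset.sum_le_sum fun i _ => inner i
        _ = s * sh := by rw [hshdef, Finset.mul_sum]
    calc t2 ^ 2 ≤ s * (∑ i, (∑ j, P j * Hm i j) ^ 2) := cs
      _ ≤ s * (s * sh) := mul_le_mul_of_nonneg_left sums hs
      _ = s ^ 2 * sh := by ring
  have cs3 : t3 ^ 2 ≤ (n : ℝ) * sh := by
    have h1 : t3 ^ 2 ≤ (n : ℝ) * ∑ i, Hm i i ^ 2 := by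
      have := sq_sum_le_card_mul_sum_sq (s := (Finset.univ : Finset (Fin n)))
        (f := fun i => Hm i i)
      simpa using this
    have h2 : (∑ i, Hm i i ^ 2) ≤ sh := by
      rw [hshdef]
      refine Finset.sum_le_sum fun i _ => ?_
      exact Finset.single_le_sum (f := fun j => Hm i j ^ 2) (fun j _ => sq_nonneg _)
        (Finset.mem_univ i)
    calc t3 ^ 2 ≤ (n : ℝ) * ∑ i, Hm i i ^ 2 := h1
      _ ≤ (n : ℝ) * sh := mul_le_mul_of_nonneg_left h2 (by positivity)
  -- bounds on the three terms
  have b1 : s * t1 / φ ^ 2 ≤ (1/4) * (s ^ 2 / φ ^ 3) + 16 * (l ^ 2 * φ) := by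
    refine le_trans ?_ (term_bound1 hφ hs hl cs1)
    gcongr
    · exact le_abs_self t1
  have b2 : 2 * t2 / φ ^ 2 ≤ (1/4) * (s ^ 2 / φ ^ 3) + (4 * sh) / φ := by
    refine le_trans ?_ (term_bound2 (u := 2 * t2) hφ hs (by positivity) (by nlinarith))
    gcongr
    exact le_abs_self _
  have b3 : s * t3 / φ ^ 2 ≤ (1/4) * (s ^ 2 / φ ^ 3) + ((n : ℝ) * sh) / φ := by
    refine le_trans ?_ (term_bound2 (u := s * t3) hφ hs (by positivity) (by nlinarith))
    gcongr
    exact le_abs_self _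
  have key : (s * t1 + (2 * t2 + s * t3)) / φ ^ 2
      ≤ (3/4) * (s ^ 2 / φ ^ 3) + ((4 * sh) / φ + ((n : ℝ) * sh) / φ) + 16 * (l ^ 2 * φ) := by
    have e : (s * t1 + (2 * t2 + s * t3)) / φ ^ 2
        = s * t1 / φ ^ 2 + 2 * t2 / φ ^ 2 + s * t3 / φ ^ 2 := by ring
    rw [e]; linarith
  calc m * (s * t1 + (2 * t2 + s * t3)) / φ ^ 2
      = m * ((s * t1 + (2 * t2 + s * t3)) / φ ^ 2) := by ring
    _ ≤ m * ((3/4) * (s ^ 2 / φ ^ 3) + ((4 * sh) / φ + ((n : ℝ) * sh) / φ) + 16 * (l ^ 2 * φ)) :=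
        mul_le_mul_of_nonneg_left key hm
    _ = (3/4) * (m * s ^ 2 / φ ^ 3) + 4 * (m * sh / φ) + (n : ℝ) * (m * sh / φ)
        + 16 * (m * φ * l ^ 2) := by ring

end PointwiseBounds

/-- With `J = ∫ m₂ ‖∇²f‖²/f`, `L = ∫ m₂ ‖∇f‖⁴/f³` and `N = ∫ m₂ f ‖∇ log m₂‖⁴`,
there is a constant `C` depending only on the dimension with `L ≤ C (J + N)`. -/
theorem L_le_C_J_add_N (n : ℕ) :
    ∃ C > (0 : ℝ), ∀ (m₂ f : (Fin n → ℝ) → ℝ),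
      ContDiff ℝ (⊤ : ℕ∞) m₂ → ContDiff ℝ (⊤ : ℕ∞) f →
      (∀ x, 0 < m₂ x) → (∀ x, 0 < f x) →
      (∫ x, m₂ x) = 1 → (∫ x, m₂ x * f x) = 1 →
      (∃ c Cg : ℝ, 0 < c ∧ ∀ x, m₂ x ≤ Cg * Real.exp (-c * ‖x‖ ^ 2)) →
      Integrable (fun x => m₂ x *
        (∑ i : Fin n, ∑ j : Fin n, (pd i (pd j f) x) ^ 2) / f x) →
      Integrable (fun x => m₂ x * (∑ i : Fin n, (pd i f x) ^ 2) ^ 2 / (f x) ^ 3) →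
      Integrable (fun x => m₂ x * f x *
        (∑ i : Fin n, (pd i (fun y => Real.log (m₂ y)) x) ^ 2) ^ 2) →
      (∫ x, m₂ x * (∑ i : Fin n, (pd i f x) ^ 2) ^ 2 / (f x) ^ 3)
        ≤ C * ((∫ x, m₂ x *
              (∑ i : Fin n, ∑ j : Fin n, (pd i (pd j f) x) ^ 2) / f x)
            + ∫ x, m₂ x * f x *
              (∑ i : Fin n, (pd i (fun y => Real.log (m₂ y)) x) ^ 2) ^ 2) := by
  refine ⟨(n : ℝ) + 16, by positivity, ?_⟩
  intro m₂ f hm hf hmpos hfpos hm1 hmf1 _ hJint hLint hNint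
  have hfx : ∀ x, f x ≠ 0 := fun x => (hfpos x).ne'
  have hmx : ∀ x, m₂ x ≠ 0 := fun x => (hmpos x).ne'
  -- smoothness of W i
  have hWsmooth : ∀ i : Fin n,
      ContDiff ℝ (⊤ : ℕ∞) (fun y => m₂ y * ((∑ j, (pd j f y) ^ 2) * pd i f y * ((f y) ^ 2)⁻¹)) :=
    fun i => hm.mul (((ContDiff.sum fun j _ => (pd_contDiff hf j).pow 2).mul
      (pd_contDiff hf i)).mul ((hf.pow 2).inv fun x => pow_ne_zero 2 (hfx x)))
  -- relation between pd of m₂ and pd of log m₂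
  have hpdm : ∀ (i : Fin n) (x), pd i m₂ x = pd i (fun y => Real.log (m₂ y)) x * m₂ x := by
    intro i x
    rw [pd_log (hm.differentiable (by simp) x) (hmx x)]
    exact (div_mul_cancel₀ _ (hmx x)).symm
  -- canonical formula for pd i (W i)
  have hformula : ∀ (i : Fin n) (x),
      pd i (fun y => m₂ y * ((∑ j, (pd j f y) ^ 2) * pd i f y * ((f y) ^ 2)⁻¹)) x
      = m₂ x * ((∑ j, (pd j f x) ^ 2) * (pd i (fun y => Real.log (m₂ y)) x * pd i f x)
          + ((2 * ∑ j, pd j f x * pd i (pd j f) x) * pd i f x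
            + (∑ j, (pd j f x) ^ 2) * pd i (pd i f) x)) / (f x) ^ 2
        - 2 * m₂ x * ((∑ j, (pd j f x) ^ 2) * (pd i f x) ^ 2) / (f x) ^ 3 := by
    intro i x
    rw [pd_W_formula hm hf hfpos i x, hpdm i x]
    ring
  -- integrability of m₂ * f
  have hMF : Integrable (fun x => m₂ x * f x) := by
    by_contra hc
    rw [integral_undef hc] at hmf1
    norm_num at hmf1
  -- integrability of W i
  have hWint : ∀ i : Fin n,
      Integrable (fun y => m₂ y * ((∑ j, (pd j f y) ^ 2) * pd i f y * ((f y) ^ 2)⁻¹)) := by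
    intro i
    refine Integrable.mono' ((hLint.const_mul (1/4)).add (hMF.const_mul 16))
      ((hWsmooth i).continuous.aestronglyMeasurable)
      (Filter.Eventually.of_forall fun x => ?_)
    rw [Real.norm_eq_abs]
    exact bound_W (fun j => pd j f x) i (hmpos x).le (hfpos x)
  -- integrability of pd i (W i)
  have hDomInt : Integrable (fun x =>
      (5/2) * (m₂ x * (∑ i, (pd i f x) ^ 2) ^ 2 / (f x) ^ 3)
      + 10 * (m₂ x * (∑ i, ∑ j, (pd i (pd j f) x) ^ 2) / f x)
      + 16 * (m₂ x * f x * (∑ i, (pd i (fun y => Real.log (m₂ y)) x) ^ 2) ^ 2)) :=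
    ((hLint.const_mul _).add (hJint.const_mul _)).add (hNint.const_mul _)
  have hpdWint : ∀ i : Fin n,
      Integrable (pd i (fun y => m₂ y * ((∑ j, (pd j f y) ^ 2) * pd i f y * ((f y) ^ 2)⁻¹))) := by
    intro i
    refine Integrable.mono' hDomInt
      (pd_continuous (hWsmooth i) i).aestronglyMeasurable
      (Filter.Eventually.of_forall fun x => ?_)
    rw [Real.norm_eq_abs, hformula i x]
    exact bound_pdW (fun j => pd j f x) (fun j => pd j (fun y => Real.log (m₂ y)) x)
      (fun a b => pd a (pd b f) x) i (hmpos x).le (hfpos x)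
  -- the integrals of the divergences vanish
  have hzero : ∀ i : Fin n,
      ∫ x, pd i (fun y => m₂ y * ((∑ j, (pd j f y) ^ 2) * pd i f y * ((f y) ^ 2)⁻¹)) x = 0 :=
    fun i => integral_pd_eq_zero (hWsmooth i) i (hWint i) (hpdWint i)
  have hsumInt : Integrable (fun x => ∑ i : Fin n,
      pd i (fun y => m₂ y * ((∑ j, (pd j f y) ^ 2) * pd i f y * ((f y) ^ 2)⁻¹)) x) :=
    integrable_finset_sum _ (fun i _ => hpdWint i)
  have hsumzero : ∫ x, (∑ i : Fin n,
      pd i (fun y => m₂ y * ((∑ j, (pd j f y) ^ 2) * pd i f y * ((f y) ^ 2)⁻¹)) x) = 0 := by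
    rw [integral_finset_sum _ (fun i _ => hpdWint i)]
    simp only [hzero, Finset.sum_const_zero]
  -- the function G = Σ pd(W) + 2 E
  have hGint : Integrable (fun x => (∑ i : Fin n,
      pd i (fun y => m₂ y * ((∑ j, (pd j f y) ^ 2) * pd i f y * ((f y) ^ 2)⁻¹)) x)
      + 2 * (m₂ x * (∑ i, (pd i f x) ^ 2) ^ 2 / (f x) ^ 3)) :=
    hsumInt.add (hLint.const_mul 2)
  have hGeval : ∫ x, ((∑ i : Fin n,
      pd i (fun y => m₂ y * ((∑ j, (pd j f y) ^ 2) * pd i f y * ((f y) ^ 2)⁻¹)) x)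
      + 2 * (m₂ x * (∑ i, (pd i f x) ^ 2) ^ 2 / (f x) ^ 3))
      = 2 * ∫ x, m₂ x * (∑ i, (pd i f x) ^ 2) ^ 2 / (f x) ^ 3 := by
    rw [integral_add hsumInt (hLint.const_mul 2), hsumzero, integral_const_mul, zero_add]
  -- pointwise bound of G
  have hBndInt : Integrable (fun x =>
      (3/4) * (m₂ x * (∑ i, (pd i f x) ^ 2) ^ 2 / (f x) ^ 3)
      + 4 * (m₂ x * (∑ i, ∑ j, (pd i (pd j f) x) ^ 2) / f x)
      + (n : ℝ) * (m₂ x * (∑ i, ∑ j, (pd i (pd j f) x) ^ 2) / f x)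
      + 16 * (m₂ x * f x * (∑ i, (pd i (fun y => Real.log (m₂ y)) x) ^ 2) ^ 2)) :=
    (((hLint.const_mul _).add (hJint.const_mul _)).add (hJint.const_mul _)).add
      (hNint.const_mul _)
  have hGle : ∀ x, (∑ i : Fin n,
      pd i (fun y => m₂ y * ((∑ j, (pd j f y) ^ 2) * pd i f y * ((f y) ^ 2)⁻¹)) x)
      + 2 * (m₂ x * (∑ i, (pd i f x) ^ 2) ^ 2 / (f x) ^ 3)
      ≤ (3/4) * (m₂ x * (∑ i, (pd i f x) ^ 2) ^ 2 / (f x) ^ 3)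
      + 4 * (m₂ x * (∑ i, ∑ j, (pd i (pd j f) x) ^ 2) / f x)
      + (n : ℝ) * (m₂ x * (∑ i, ∑ j, (pd i (pd j f) x) ^ 2) / f x)
      + 16 * (m₂ x * f x * (∑ i, (pd i (fun y => Real.log (m₂ y)) x) ^ 2) ^ 2) := by
    intro x
    have hid : (∑ i : Fin n,
        pd i (fun y => m₂ y * ((∑ j, (pd j f y) ^ 2) * pd i f y * ((f y) ^ 2)⁻¹)) x)
        = m₂ x * ((∑ j, (pd j f x) ^ 2) * (∑ j, pd j (fun y => Real.log (m₂ y)) x * pd j f x)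
            + (2 * (∑ a, ∑ b, pd a f x * pd b f x * pd a (pd b f) x)
              + (∑ j, (pd j f x) ^ 2) * (∑ a, pd a (pd a f) x))) / (f x) ^ 2
          - 2 * m₂ x * ((∑ j, (pd j f x) ^ 2) ^ 2) / (f x) ^ 3 := by
      rw [Finset.sum_congr rfl (fun i _ => hformula i x)]
      exact sum_identity (fun j => pd j f x) (fun j => pd j (fun y => Real.log (m₂ y)) x)
        (fun a b => pd a (pd b f) x) (m₂ x) (f x)
    rw [hid]
    have hb := bound_G (fun j => pd j f x) (fun j => pd j (fun y => Real.log (m₂ y)) x)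
      (fun a b => pd a (pd b f) x) (hmpos x).le (hfpos x)
    exact le_trans (le_of_eq (by ring)) hb
  -- integrate the bound
  have hmono := integral_mono hGint hBndInt hGle
  rw [hGeval] at hmono
  have hBeval : ∫ x, ((3/4) * (m₂ x * (∑ i, (pd i f x) ^ 2) ^ 2 / (f x) ^ 3)
      + 4 * (m₂ x * (∑ i, ∑ j, (pd i (pd j f) x) ^ 2) / f x)
      + (n : ℝ) * (m₂ x * (∑ i, ∑ j, (pd i (pd j f) x) ^ 2) / f x)
      + 16 * (m₂ x * f x * (∑ i, (pd i (fun y => Real.log (m₂ y)) x) ^ 2) ^ 2))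
      = (3/4) * (∫ x, m₂ x * (∑ i, (pd i f x) ^ 2) ^ 2 / (f x) ^ 3)
      + 4 * (∫ x, m₂ x * (∑ i, ∑ j, (pd i (pd j f) x) ^ 2) / f x)
      + (n : ℝ) * (∫ x, m₂ x * (∑ i, ∑ j, (pd i (pd j f) x) ^ 2) / f x)
      + 16 * (∫ x, m₂ x * f x * (∑ i, (pd i (fun y => Real.log (m₂ y)) x) ^ 2) ^ 2) := by
    have iA := hLint.const_mul (3/4)
    have iB := hJint.const_mul 4
    have iC := hJint.const_mul (n : ℝ)
    have iD := hNint.const_mul 16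
    have iAB : Integrable (fun x =>
        (3/4) * (m₂ x * (∑ i, (pd i f x) ^ 2) ^ 2 / (f x) ^ 3)
        + 4 * (m₂ x * (∑ i, ∑ j, (pd i (pd j f) x) ^ 2) / f x)) := iA.add iB
    have iABC : Integrable (fun x =>
        (3/4) * (m₂ x * (∑ i, (pd i f x) ^ 2) ^ 2 / (f x) ^ 3)
        + 4 * (m₂ x * (∑ i, ∑ j, (pd i (pd j f) x) ^ 2) / f x)
        + (n : ℝ) * (m₂ x * (∑ i, ∑ j, (pd i (pd j f) x) ^ 2) / f x)) := iAB.add iC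
    rw [integral_add iABC iD, integral_add iAB iC, integral_add iA iB,
      integral_const_mul, integral_const_mul, integral_const_mul, integral_const_mul]
  rw [hBeval] at hmono
  -- wrap up
  have hJ0 : 0 ≤ ∫ x, m₂ x * (∑ i, ∑ j, (pd i (pd j f) x) ^ 2) / f x := by
    refine integral_nonneg fun x => ?_
    exact div_nonneg (mul_nonneg (hmpos x).le (Finset.sum_nonneg fun i _ =>
      Finset.sum_nonneg fun j _ => sq_nonneg _)) (hfpos x).le
  have hN0 : 0 ≤ ∫ x, m₂ x * f x * (∑ i, (pd i (fun y => Real.log (m₂ y)) x) ^ 2) ^ 2 := by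
    refine integral_nonneg fun x => ?_
    exact mul_nonneg (mul_nonneg (hmpos x).le (hfpos x).le) (sq_nonneg _)
  have hn0 : (0:ℝ) ≤ (n : ℝ) := Nat.cast_nonneg n
  nlinarith [mul_nonneg hn0 hJ0, mul_nonneg hn0 hN0, hJ0, hN0, hmono]
end

section
/- Integration by parts identity: for smooth positive m₂ (probability density with sufficient decay) and smooth positive f, Σ_{i,j} ∫ m₂ f⁻² (∂²f/∂x_i∂x_j)(∂f/∂x_i)(∂f/∂x_j) = ∫ m₂ ‖∇f‖⁴/f³ − (1/2)∫ m₂ f⁻² ‖∇f‖² ∇log m₂ · ∇f − (1/2)∫ m₂ f⁻² ‖∇f‖² Δf. -/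
open Real MeasureTheory

theorem pd_def' {n : ℕ} (i : Fin n) (g : (Fin n → ℝ) → ℝ) (x : Fin n → ℝ) :
    pd i g x = fderiv ℝ g x (Pi.single i 1) := rfl

/-- Integration-by-parts identity:
`Σ_{i,j} ∫ m₂ f⁻² ∂²_{ij}f ∂_i f ∂_j f
  = ∫ m₂ ‖∇f‖⁴/f³ − ½ ∫ m₂ f⁻² ‖∇f‖² ∇log m₂ · ∇f − ½ ∫ m₂ f⁻² ‖∇f‖² Δf`,
assuming the decay conditions which make the boundary terms vanish, i.e. that the
integral of the divergence of `x ↦ m₂ ‖∇f‖² f⁻² ∇f` is zero. -/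
theorem ibp_gradient_fourth_identity {n : ℕ} (m₂ f : (Fin n → ℝ) → ℝ)
    (hm : ContDiff ℝ (⊤ : ℕ∞) m₂) (hf : ContDiff ℝ (⊤ : ℕ∞) f)
    (hmpos : ∀ x, 0 < m₂ x) (hfpos : ∀ x, 0 < f x)
    (hprob : (∫ x, m₂ x) = 1)
    (hint₁ : Integrable (fun x => m₂ x / (f x) ^ 2 *
      ∑ i : Fin n, ∑ j : Fin n, pd i (pd j f) x * pd i f x * pd j f x))
    (hint₂ : Integrable (fun x => m₂ x * (∑ i : Fin n, (pd i f x) ^ 2) ^ 2 / (f x) ^ 3))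
    (hint₃ : Integrable (fun x => m₂ x / (f x) ^ 2 * (∑ i : Fin n, (pd i f x) ^ 2) *
      ∑ i : Fin n, pd i (fun y => Real.log (m₂ y)) x * pd i f x))
    (hint₄ : Integrable (fun x => m₂ x / (f x) ^ 2 * (∑ i : Fin n, (pd i f x) ^ 2) *
      ∑ i : Fin n, pd i (pd i f) x))
    (hdiv : (∫ x, ∑ i : Fin n,
      pd i (fun y => m₂ y * (∑ j : Fin n, (pd j f y) ^ 2) * pd i f y / (f y) ^ 2) x) = 0) :
    (∫ x, m₂ x / (f x) ^ 2 *
        ∑ i : Fin n, ∑ j : Fin n, pd i (pd j f) x * pd i f x * pd j f x)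
      = (∫ x, m₂ x * (∑ i : Fin n, (pd i f x) ^ 2) ^ 2 / (f x) ^ 3)
        - (1 / 2) * (∫ x, m₂ x / (f x) ^ 2 * (∑ i : Fin n, (pd i f x) ^ 2) *
            ∑ i : Fin n, pd i (fun y => Real.log (m₂ y)) x * pd i f x)
        - (1 / 2) * (∫ x, m₂ x / (f x) ^ 2 * (∑ i : Fin n, (pd i f x) ^ 2) *
            ∑ i : Fin n, pd i (pd i f) x) := by
  have key : ∀ x, (∑ i : Fin n,
      pd i (fun y => m₂ y * (∑ j : Fin n, (pd j f y) ^ 2) * pd i f y / (f y) ^ 2) x)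
      = 2 * (m₂ x / (f x) ^ 2 *
            ∑ i : Fin n, ∑ j : Fin n, pd i (pd j f) x * pd i f x * pd j f x)
        - 2 * (m₂ x * (∑ i : Fin n, (pd i f x) ^ 2) ^ 2 / (f x) ^ 3)
        + (m₂ x / (f x) ^ 2 * (∑ i : Fin n, (pd i f x) ^ 2) *
            ∑ i : Fin n, pd i (fun y => Real.log (m₂ y)) x * pd i f x)
        + (m₂ x / (f x) ^ 2 * (∑ i : Fin n, (pd i f x) ^ 2) *
            ∑ i : Fin n, pd i (pd i f) x) := by
    intro x
    have hfx : f x ≠ 0 := (hfpos x).ne'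
    have hmx : m₂ x ≠ 0 := (hmpos x).ne'
    have hfd : ∀ y, HasFDerivAt f (fderiv ℝ f y) y :=
      fun y => (hf.differentiable (by simp) y).hasFDerivAt
    have hmd : HasFDerivAt m₂ (fderiv ℝ m₂ x) x := (hm.differentiable (by simp) x).hasFDerivAt
    have hpdc : ∀ j : Fin n, ContDiff ℝ (⊤ : ℕ∞) (pd j f) :=
      fun j => (hf.fderiv_right (le_refl _)).clm_apply contDiff_const
    have hpdd : ∀ (j : Fin n) y, HasFDerivAt (pd j f) (fderiv ℝ (pd j f) y) y :=
      fun j y => ((hpdc j).differentiable (by simp) y).hasFDerivAt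
    have hlog : ∀ i : Fin n, pd i (fun y => Real.log (m₂ y)) x
        = (m₂ x)⁻¹ * pd i m₂ x := by
      intro i
      rw [pd_def', (hmd.log hmx).fderiv]
      simp [pd_def']
    have key_i : ∀ i : Fin n,
        pd i (fun y => m₂ y * (∑ j : Fin n, (pd j f y) ^ 2) * pd i f y / (f y) ^ 2) x =
        2 * (m₂ x / (f x) ^ 2) * (∑ j : Fin n, pd i (pd j f) x * pd i f x * pd j f x)
        + (-(2 * m₂ x * (∑ j : Fin n, (pd j f x) ^ 2) / (f x) ^ 3)) * (pd i f x) ^ 2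
        + (m₂ x / (f x) ^ 2 * (∑ j : Fin n, (pd j f x) ^ 2) * (m₂ x)⁻¹) *
            (pd i m₂ x * pd i f x)
        + (m₂ x / (f x) ^ 2 * (∑ j : Fin n, (pd j f x) ^ 2)) * pd i (pd i f) x := by
      intro i
      have hG : HasFDerivAt (fun y => ∑ j : Fin n, (pd j f y) ^ 2)
          (∑ j : Fin n, ((2 : ℕ) * pd j f x ^ 1) • fderiv ℝ (pd j f) x) x :=
        HasFDerivAt.fun_sum fun j _ => (hasDerivAt_pow 2 (pd j f x)).comp_hasFDerivAt x (hpdd j x)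
      have hsq : HasFDerivAt (fun y => (f y) ^ 2) (((2:ℕ) * f x ^ 1) • fderiv ℝ f x) x :=
        (hasDerivAt_pow 2 (f x)).comp_hasFDerivAt x (hfd x)
      have hinv : HasFDerivAt (fun y => ((f y) ^ 2)⁻¹)
          ((-(((f x) ^ 2) ^ 2)⁻¹) • (((2:ℕ) * f x ^ 1) • fderiv ℝ f x)) x :=
        (hasDerivAt_inv (pow_ne_zero 2 hfx)).comp_hasFDerivAt x hsq
      have hH := ((hmd.mul hG).mul (hpdd i x)).mul hinv
      conv_lhs => rw [pd_def']
      rw [show (fun y => m₂ y * (∑ j : Fin n, (pd j f y) ^ 2) * pd i f y / (f y) ^ 2)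
          = (fun y => m₂ y * (∑ j : Fin n, (pd j f y) ^ 2) * pd i f y * ((f y) ^ 2)⁻¹)
          from funext fun y => div_eq_mul_inv _ _,
          (show HasFDerivAt (fun y => m₂ y * (∑ j : Fin n, (pd j f y) ^ 2) * pd i f y * ((f y) ^ 2)⁻¹) _ x from hH).fderiv]
      simp only [ContinuousLinearMap.add_apply, ContinuousLinearMap.smul_apply,
        ContinuousLinearMap.coe_sum', Finset.sum_apply, ContinuousLinearMap.neg_apply,
        smul_eq_mul, pow_one, Nat.cast_ofNat, Pi.mul_apply, ← pd_def']
      have hTS : (∑ j : Fin n, pd i (pd j f) x * pd i f x * pd j f x)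
          = pd i f x * (∑ j : Fin n, 2 * pd j f x * pd i (pd j f) x) / 2 := by
        rw [Finset.mul_sum, Finset.sum_div]
        exact Finset.sum_congr rfl fun j _ => by ring
      rw [hTS]
      set S := ∑ j : Fin n, 2 * pd j f x * pd i (pd j f) x with hS
      set G := ∑ j : Fin n, (pd j f x) ^ 2 with hGdef
      field_simp
      ring
    rw [Finset.sum_congr rfl fun i _ => key_i i]
    simp only [Finset.sum_add_distrib, ← Finset.mul_sum, hlog]
    have h2 : (∑ i : Fin n, (m₂ x)⁻¹ * pd i m₂ x * pd i f x)
        = (m₂ x)⁻¹ * ∑ i : Fin n, pd i m₂ x * pd i f x := by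
      rw [Finset.mul_sum]
      exact Finset.sum_congr rfl fun i _ => by ring
    rw [h2]
    have hG2 : (∑ i : Fin n, (pd i f x) ^ 2) ^ 2
        = (∑ i : Fin n, (pd i f x) ^ 2) * (∑ i : Fin n, (pd i f x) ^ 2) := sq _
    set G := ∑ i : Fin n, (pd i f x) ^ 2
    set S1 := ∑ i : Fin n, ∑ j : Fin n, pd i (pd j f) x * pd i f x * pd j f x
    set S2 := ∑ i : Fin n, pd i m₂ x * pd i f x
    set S3 := ∑ i : Fin n, pd i (pd i f) x
    have hmx : m₂ x ≠ 0 := (hmpos x).ne'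
    rw [hG2]
    field_simp
    ring
  simp only [key] at hdiv
  have h1 : Integrable (fun x => 2 * (m₂ x / (f x) ^ 2 *
      ∑ i : Fin n, ∑ j : Fin n, pd i (pd j f) x * pd i f x * pd j f x)
      - 2 * (m₂ x * (∑ i : Fin n, (pd i f x) ^ 2) ^ 2 / (f x) ^ 3)) :=
    (hint₁.const_mul 2).sub (hint₂.const_mul 2)
  have h13 : Integrable (fun x => (2 * (m₂ x / (f x) ^ 2 *
      ∑ i : Fin n, ∑ j : Fin n, pd i (pd j f) x * pd i f x * pd j f x)
      - 2 * (m₂ x * (∑ i : Fin n, (pd i f x) ^ 2) ^ 2 / (f x) ^ 3))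
      + (m₂ x / (f x) ^ 2 * (∑ i : Fin n, (pd i f x) ^ 2) *
          ∑ i : Fin n, pd i (fun y => Real.log (m₂ y)) x * pd i f x)) := h1.add hint₃
  rw [integral_add h13 hint₄, integral_add h1 hint₃,
    integral_sub (hint₁.const_mul 2) (hint₂.const_mul 2),
    integral_const_mul, integral_const_mul] at hdiv
  linarith
end
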